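/- arXiv:1610.05453 — 2 statements merged into one kernel-verified Lean document; each statement's English description precedes it below -/
import Mathlib

section
/- If Ω is a discrete filtered set, then every Ω-continuable holomorphic germ at 0 is endlessly continuable (one may take F_L = Ω̃_L in the definition of endless continuability). -/
open MeasureTheory Metric Set

noncomputable section

/-- A discrete filtered set (d.f.s.): a family of finite subsets of `ℂ`,
nondecreasing in the parameter, empty for small parameter. -/
structure DFS where
  sets : ℝ → Set ℂ
  finite : ∀ L, (sets L).Finite
  mono : ∀ ⦃L₁ L₂ : ℝ⦄, L₁ ≤ L₂ → sets L₁ ⊆ sets L₂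
  empty_small : ∃ δ > 0, sets δ = ∅

/-- Upper closure of a filtered family: `Ω̃_L := ⋂_{ε>0} Ω_{L+ε}`. -/
def ucFun (f : ℝ → Set ℂ) (L : ℝ) : Set ℂ := ⋂ ε > (0:ℝ), f (L + ε)

/-- `S_Ω := {(λ,ω) : λ ≥ 0, ω ∈ Ω_λ}`. -/
def SingSet (f : ℝ → Set ℂ) : Set (ℝ × ℂ) := {p | 0 ≤ p.1 ∧ p.2 ∈ f p.1}

/-- The allowed open set `M_Ω := (ℝ×ℂ) \ closure S_Ω`. -/
def MSet (f : ℝ → Set ℂ) : Set (ℝ × ℂ) := (closure (SingSet f))ᶜ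

/-- Sum of two filtered families. -/
def sumFun (f g : ℝ → Set ℂ) (L : ℝ) : Set ℂ :=
  {z | ∃ L₁ L₂ : ℝ, 0 ≤ L₁ ∧ 0 ≤ L₂ ∧ L₁ + L₂ = L ∧
      ∃ ω₁ ∈ f L₁, ∃ ω₂ ∈ g L₂, z = ω₁ + ω₂} ∪ f L ∪ g L

/-- `iterSum f n` is the `(n+1)`-fold sum `f * ⋯ * f`. -/
def iterSum (f : ℝ → Set ℂ) : ℕ → ℝ → Set ℂ
  | 0 => f
  | n + 1 => sumFun (iterSum f n) f

/-- Arclength of `γ` on `[0,t]`. -/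
def pathLen (γ : ℝ → ℂ) (t : ℝ) : ℝ := (eVariationOn γ (Set.Icc 0 t)).toReal

/-- `γ : [0,t₁] → ℂ` is an `Ω`-allowed path. -/
def OmAllowed (f : ℝ → Set ℂ) (γ : ℝ → ℂ) (t₁ : ℝ) : Prop :=
  0 ≤ t₁ ∧ γ 0 = 0 ∧ (∃ K, LipschitzOnWith K γ (Set.Icc 0 t₁)) ∧
    ∀ t ∈ Set.Icc 0 t₁, (pathLen γ t, γ t) ∈ MSet f

/-- The germ `φ` admits analytic continuation along `γ|_{[0,t₁]}`, ending
with the germ `ψ` at `γ t₁`. -/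
def ContinuesAlongTo (φ : ℂ → ℂ) (γ : ℝ → ℂ) (t₁ : ℝ) (ψ : ℂ → ℂ) : Prop :=
  ∃ (F : ℝ → ℂ → ℂ) (r : ℝ → ℝ),
    (∀ t ∈ Set.Icc 0 t₁, 0 < r t ∧ DifferentiableOn ℂ (F t) (ball (γ t) (r t))) ∧
    (∀ t ∈ Set.Icc 0 t₁, ∀ᶠ s in nhdsWithin t (Set.Icc 0 t₁),
        Set.EqOn (F s) (F t) (ball (γ s) (r s) ∩ ball (γ t) (r t))) ∧
    (∀ᶠ z in nhds 0, F 0 z = φ z) ∧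
    (∀ᶠ z in nhds (γ t₁), F t₁ z = ψ z)

/-- The germ `φ` admits analytic continuation along `γ|_{[0,t₁]}`. -/
def ContinuesAlong (φ : ℂ → ℂ) (γ : ℝ → ℂ) (t₁ : ℝ) : Prop :=
  ∃ ψ, ContinuesAlongTo φ γ t₁ ψ

/-- `φ` defines a holomorphic germ at `0`. -/
def HolGermAtZero (φ : ℂ → ℂ) : Prop := ∃ r > 0, DifferentiableOn ℂ φ (ball 0 r)

/-- `Ω`-continuability: analytic continuation along every `Ω`-allowed path. -/
def OmContinuable (f : ℝ → Set ℂ) (φ : ℂ → ℂ) : Prop :=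
  HolGermAtZero φ ∧ ∀ γ t₁, OmAllowed f γ t₁ → ContinuesAlong φ γ t₁

/-- Endless continuability. -/
def EndlesslyContinuable (φ : ℂ → ℂ) : Prop :=
  HolGermAtZero φ ∧ ∀ L > (0:ℝ), ∃ F : Set ℂ, F.Finite ∧
    ∀ γ : ℝ → ℂ, γ 0 = 0 → (∃ K, LipschitzOnWith K γ (Set.Icc 0 1)) →
      pathLen γ 1 < L → (∀ t ∈ Set.Ioc (0:ℝ) 1, γ t ∉ F) →
      ContinuesAlong φ γ 1

/-- Euclidean norm on `ℝ × ℂ ≅ ℝ³`. -/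
def eucNorm (p : ℝ × ℂ) : ℝ := Real.sqrt (p.1 ^ 2 + ‖p.2‖ ^ 2)

/-- Euclidean distance on `ℝ × ℂ ≅ ℝ³`. -/
def eucDist (p q : ℝ × ℂ) : ℝ := eucNorm (p - q)

/-- Euclidean distance from a point to a set in `ℝ × ℂ`. -/
def eucSetDist (p : ℝ × ℂ) (S : Set (ℝ × ℂ)) : ℝ := sInf (eucDist p '' S)

/-- The d.f.s. associated with a closed discrete set `Σ`. -/
def omOf (S : Set ℂ) (L : ℝ) : Set ℂ := {ω ∈ S | ‖ω‖ ≤ L}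

/-- `η(v) := dist(v, {(0,0)} ∪ S_Ω)`. -/
def etaFun (f : ℝ → Set ℂ) (v : ℝ × ℂ) : ℝ :=
  eucSetDist v ({((0:ℝ), (0:ℂ))} ∪ SingSet f)

/-- `D(w, v⃗) := Σⱼ η(vⱼ) + |w − Σⱼ vⱼ|`. -/
def DFun (f : ℝ → Set ℂ) (n : ℕ) (w : ℝ × ℂ) (v : Fin n → ℝ × ℂ) : ℝ :=
  (∑ j, etaFun f (v j)) + eucNorm (w - ∑ j, v j)

/-- Convolution of holomorphic germs: `(f*g)(ζ) = ∫₀^ζ f(ξ)g(ζ-ξ)dξ`. -/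
def cvl (f g : ℂ → ℂ) (ζ : ℂ) : ℂ := ζ * ∫ s in (0:ℝ)..1, f (s • ζ) * g (ζ - s • ζ)

/-- Iterated convolution `1 * f₁ * ⋯ * f_n`. -/
def iterConv : (n : ℕ) → (Fin n → ℂ → ℂ) → ℂ → ℂ
  | 0, _ => fun _ => 1
  | n + 1, f => cvl (iterConv n (fun i => f i.castSucc)) (f (Fin.last n))

/-- The standard simplex `Δ_n`. -/
def simplex (n : ℕ) : Set (Fin n → ℝ) := {s | (∀ i, 0 ≤ s i) ∧ ∑ i, s i ≤ 1}

end

/-!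
A path avoiding `Ω̃_L` after time `0` and of length `< L` is `Ω`-allowed: a point
`(λ, ω)` of the closure of `S_Ω` satisfies `ω ∈ Ω̃_λ`, because the sets `Ω_λ` are
closed and increase with `λ`; at time `0` the path sits at `(0, 0)`, which is not in
that closure since `Ω_δ = ∅` for some `δ > 0`. Finiteness of `Ω̃_L ⊆ Ω_{L+1}` gives
endless continuability with `F_L = Ω̃_L`.
-/

lemma ucFun_subset {f : ℝ → Set ℂ} {L ε : ℝ} (hε : 0 < ε) : ucFun f L ⊆ f (L + ε) :=
  biInter_subset_of_mem hε

lemma ucFun_mono {f : ℝ → Set ℂ} (hf : Monotone f) : Monotone (ucFun f) := by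
  intro L₁ L₂ hL z hz
  simp only [ucFun, mem_iInter] at hz ⊢
  exact fun ε hε => hf (by linarith) (hz ε hε)

lemma mem_ucFun_of_mem_closure_singSet {f : ℝ → Set ℂ} (hf : Monotone f)
    (hclosed : ∀ L, IsClosed (f L)) {p : ℝ × ℂ} (hp : p ∈ closure (SingSet f)) :
    p.2 ∈ ucFun f p.1 := by
  simp only [ucFun, mem_iInter]
  intro ε hε
  have hopen : IsOpen {q : ℝ × ℂ | q.1 < p.1 + ε} := isOpen_lt continuous_fst continuous_const
  have hsub : {q : ℝ × ℂ | q.1 < p.1 + ε} ∩ SingSet f ⊆ Prod.snd ⁻¹' f (p.1 + ε) :=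
    fun q ⟨hq, _, hq₂⟩ => hf hq.le hq₂
  exact closure_minimal hsub ((hclosed _).preimage continuous_snd)
    (hopen.inter_closure ⟨by simpa using hε, hp⟩)

lemma pathLen_zero (γ : ℝ → ℂ) : pathLen γ 0 = 0 := by
  simp [pathLen]

lemma pathLen_monotoneOn {γ : ℝ → ℂ} {K : NNReal} {u : ℝ}
    (hγ : LipschitzOnWith K γ (Icc 0 u)) : MonotoneOn (pathLen γ) (Icc 0 u) := by
  intro a _ b hb hab
  have hbv : BoundedVariationOn γ (Icc 0 b) := by
    simpa using (hγ.mono (Icc_subset_Icc_right hb.2)).locallyBoundedVariationOn 0 b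
      (left_mem_Icc.2 hb.1) (right_mem_Icc.2 hb.1)
  exact ENNReal.toReal_mono hbv (eVariationOn.mono γ (Icc_subset_Icc_right hab))

namespace DFS

lemma finite_ucFun (Ω : DFS) (L : ℝ) : (ucFun Ω.sets L).Finite :=
  (Ω.finite (L + 1)).subset (ucFun_subset one_pos)

lemma mem_ucFun_of_mem_closure (Ω : DFS) {p : ℝ × ℂ}
    (hp : p ∈ closure (SingSet Ω.sets)) : p.2 ∈ ucFun Ω.sets p.1 :=
  mem_ucFun_of_mem_closure_singSet Ω.mono (fun L => (Ω.finite L).isClosed) hp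

lemma zero_notMem_closure_singSet (Ω : DFS) : ((0 : ℝ), (0 : ℂ)) ∉ closure (SingSet Ω.sets) := by
  obtain ⟨δ, hδ, hempty⟩ := Ω.empty_small
  intro h
  have := ucFun_subset hδ (Ω.mem_ucFun_of_mem_closure h)
  simp [hempty] at this

lemma omAllowed_of_forall_notMem_ucFun (Ω : DFS) {γ : ℝ → ℂ} {L : ℝ} (h₀ : γ 0 = 0)
    (hlip : ∃ K, LipschitzOnWith K γ (Icc 0 1)) (hlen : pathLen γ 1 < L)
    (havoid : ∀ t ∈ Ioc (0 : ℝ) 1, γ t ∉ ucFun Ω.sets L) :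
    OmAllowed Ω.sets γ 1 := by
  obtain ⟨K, hK⟩ := hlip
  refine ⟨zero_le_one, h₀, ⟨K, hK⟩, fun t ht hclosure => ?_⟩
  rcases ht.1.eq_or_lt with rfl | htpos
  · rw [pathLen_zero, h₀] at hclosure
    exact Ω.zero_notMem_closure_singSet hclosure
  · have hle : pathLen γ t ≤ L :=
      (pathLen_monotoneOn hK ht (right_mem_Icc.2 zero_le_one) ht.2).trans hlen.le
    exact havoid t ⟨htpos, ht.2⟩ (ucFun_mono Ω.mono hle (Ω.mem_ucFun_of_mem_closure hclosure))

end DFS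

/-- Every `Ω`-continuable germ is endlessly continuable; one may take
`F_L = Ω̃_L` in the definition of endless continuability. -/
theorem Om_continuable_endless (Ω : DFS) (φ : ℂ → ℂ)
    (h : OmContinuable Ω.sets φ) :
    EndlesslyContinuable φ ∧
    ∀ L > (0:ℝ), ∀ γ : ℝ → ℂ, γ 0 = 0 →
      (∃ K, LipschitzOnWith K γ (Set.Icc 0 1)) →
      pathLen γ 1 < L → (∀ t ∈ Set.Ioc (0:ℝ) 1, γ t ∉ ucFun Ω.sets L) →
      ContinuesAlong φ γ 1 := by
  refine ⟨⟨h.1, fun L _ => ⟨ucFun Ω.sets L, Ω.finite_ucFun L, ?_⟩⟩, fun L _ => ?_⟩ <;>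
  exact fun γ h₀ hlip hlen havoid =>
    h.2 γ 1 (Ω.omAllowed_of_forall_notMem_ucFun h₀ hlip hlen havoid)
end

section
/- (Lipschitz estimate for the deformation vector field.) With η(v) := dist(v, {(0,0)} ∪ S_Ω) (a 1-Lipschitz function on ℝ×ℂ) and D(t, v⃗) := Σⱼ η(vⱼ) + |γ̃(t) − Σⱼ vⱼ|, define Xⱼ(t, v⃗) := (η(vⱼ)/D(t,v⃗)) γ̃′(t) for j = 1,…,n. Then for all t and all u⃗, v⃗ ∈ (ℝ×ℂ)ⁿ: Σ_{j=1}^{n} |Xⱼ(t,u⃗) − Xⱼ(t,v⃗)| ≤ 3 (|γ̃′(t)| / D(t,u⃗)) Σ_{j=1}^{n} |uⱼ − vⱼ|. -/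
open MeasureTheory Metric Set

/-! Each `η(vⱼ)` moves by at most `|uⱼ - vⱼ|` and `D` by at most `2 Σⱼ |uⱼ - vⱼ|`. Writing
`η(uⱼ)/A - η(vⱼ)/B = (η(uⱼ) - η(vⱼ))/A + η(vⱼ)(1/A - 1/B)` and using `Σⱼ η(vⱼ) ≤ B`, the first
term contributes `1/A` and the second `|A - B|/A ≤ 2/A` times `Σⱼ |uⱼ - vⱼ|`. On `ℝ × ℂ` the
norm is that of `WithLp 2 (ℝ × ℂ)`, where `η` is an `infDist`, hence `1`-Lipschitz. -/

open Finset

section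

variable {ι : Type*} [Fintype ι]

theorem sum_abs_div_sub_div_le (a b d : ι → ℝ) {A B : ℝ} (hA : 0 < A)
    (hb : ∀ j, 0 ≤ b j) (hbB : ∑ j, b j ≤ B) (hd : ∀ j, |a j - b j| ≤ d j)
    (hAB : |A - B| ≤ 2 * ∑ j, d j) :
    ∑ j, |a j / A - b j / B| ≤ 3 / A * ∑ j, d j := by
  have hmass : (∑ j, b j) * |A⁻¹ - B⁻¹| ≤ |A - B| / A := by
    rcases (sum_nonneg fun j _ => hb j).trans hbB |>.eq_or_lt with hB | hB
    -- `B = 0` forces every `b j = 0`, so the junk value `B⁻¹ = 0` does no harm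
    · have : ∑ j, b j = 0 := le_antisymm (hB ▸ hbB) (sum_nonneg fun j _ => hb j)
      rw [this, zero_mul]
      positivity
    · rw [inv_sub_inv hA.ne' hB.ne', abs_div, abs_of_pos (mul_pos hA hB), abs_sub_comm]
      calc (∑ j, b j) * (|A - B| / (A * B)) ≤ B * (|A - B| / (A * B)) := by gcongr
        _ = |A - B| / A := by field_simp
  calc ∑ j, |a j / A - b j / B|
      ≤ ∑ j, (|a j - b j| / A + b j * |A⁻¹ - B⁻¹|) := by
        refine sum_le_sum fun j _ => ?_
        have split : a j / A - b j / B = (a j - b j) / A + b j * (A⁻¹ - B⁻¹) := by ring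
        rw [split]
        refine (abs_add_le _ _).trans_eq ?_
        rw [abs_div, abs_mul, abs_of_pos hA, abs_of_nonneg (hb j)]
    _ = (∑ j, |a j - b j|) / A + (∑ j, b j) * |A⁻¹ - B⁻¹| := by
        rw [sum_add_distrib, sum_div, sum_mul]
    _ ≤ (∑ j, d j) / A + (2 * ∑ j, d j) / A := by
        gcongr
        · exact hd _
        · exact hmass.trans (div_le_div_of_nonneg_right hAB hA.le)
    _ = 3 / A * ∑ j, d j := by ring

variable {E : Type*} [SeminormedAddCommGroup E]

theorem LipschitzWith.abs_sub_le_norm_sub {η : E → ℝ} (hη : LipschitzWith 1 η) (x y : E) :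
    |η x - η y| ≤ ‖x - y‖ := by
  simpa [Real.dist_eq, dist_eq_norm] using hη.dist_le_mul x y

def deformationDenom (η : E → ℝ) (w : E) (v : ι → E) : ℝ :=
  ∑ j, η (v j) + ‖w - ∑ j, v j‖

theorem abs_deformationDenom_sub_le {η : E → ℝ} (hη : LipschitzWith 1 η) (w : E)
    (u v : ι → E) :
    |deformationDenom η w u - deformationDenom η w v| ≤ 2 * ∑ j, ‖u j - v j‖ := by
  have hsum : |∑ j, η (u j) - ∑ j, η (v j)| ≤ ∑ j, ‖u j - v j‖ := by
    rw [← sum_sub_distrib]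
    exact (abs_sum_le_sum_abs _ _).trans (sum_le_sum fun j _ => hη.abs_sub_le_norm_sub _ _)
  have hnorm : |‖w - ∑ j, u j‖ - ‖w - ∑ j, v j‖| ≤ ∑ j, ‖u j - v j‖ := by
    refine (abs_norm_sub_norm_le _ _).trans ?_
    rw [sub_sub_sub_cancel_left, ← sum_sub_distrib]
    exact norm_sum_le _ _ |>.trans_eq (by simp_rw [norm_sub_rev])
  calc _ = |(∑ j, η (u j) - ∑ j, η (v j)) + (‖w - ∑ j, u j‖ - ‖w - ∑ j, v j‖)| := by
        simp only [deformationDenom]; ring_nf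
    _ ≤ _ := (abs_add_le _ _).trans (by linarith)

theorem sum_norm_smul_sub_smul_le {F : Type*} [SeminormedAddCommGroup F] [NormedSpace ℝ F]
    {η : E → ℝ} (hη : LipschitzWith 1 η) (hη₀ : ∀ x, 0 ≤ η x) (w : E) (u v : ι → E) (ξ : F)
    (hu : 0 < deformationDenom η w u) :
    ∑ j, ‖(η (u j) / deformationDenom η w u) • ξ - (η (v j) / deformationDenom η w v) • ξ‖
      ≤ 3 * (‖ξ‖ / deformationDenom η w u) * ∑ j, ‖u j - v j‖ := by
  have hcoeff := sum_abs_div_sub_div_le (fun j => η (u j)) (fun j => η (v j))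
    (fun j => ‖u j - v j‖) (B := deformationDenom η w v) hu (fun j => hη₀ (v j))
    (le_add_of_nonneg_right (norm_nonneg _))
    (fun j => hη.abs_sub_le_norm_sub _ _)
    (abs_deformationDenom_sub_le hη w u v)
  calc _ = (∑ j, |η (u j) / deformationDenom η w u - η (v j) / deformationDenom η w v|)
        * ‖ξ‖ := by
        simp_rw [sum_mul, ← sub_smul, norm_smul, Real.norm_eq_abs]
    _ ≤ 3 / deformationDenom η w u * (∑ j, ‖u j - v j‖) * ‖ξ‖ := by gcongr
    _ = _ := by ring

end

theorem eucNorm_eq_norm_toLp (p : ℝ × ℂ) : eucNorm p = ‖WithLp.toLp 2 p‖ := by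
  simp [eucNorm, WithLp.prod_norm_eq_of_L2, Real.norm_eq_abs, sq_abs]

theorem eucSetDist_eq_infDist (p : ℝ × ℂ) {S : Set (ℝ × ℂ)} (hS : S.Nonempty) :
    eucSetDist p S = infDist (WithLp.toLp 2 p) (WithLp.toLp 2 '' S) := by
  have h := isGLB_infDist (x := WithLp.toLp 2 p) (hS.image (WithLp.toLp 2))
  simp_rw [image_image, dist_eq_norm, ← WithLp.toLp_sub, ← eucNorm_eq_norm_toLp] at h
  exact h.csInf_eq (hS.image _)

theorem vector_field_lipschitz_general (Ω : DFS) (n : ℕ) (w ξ : ℝ × ℂ)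
    (u v : Fin n → ℝ × ℂ)
    (hu : 0 < DFun Ω.sets n w u) :
    ∑ j, eucNorm ((etaFun Ω.sets (u j) / DFun Ω.sets n w u) • ξ -
        (etaFun Ω.sets (v j) / DFun Ω.sets n w v) • ξ)
      ≤ 3 * (eucNorm ξ / DFun Ω.sets n w u) * ∑ j, eucNorm (u j - v j) := by
  set T := WithLp.toLp 2 '' ({((0:ℝ), (0:ℂ))} ∪ SingSet Ω.sets)
  have hη (p : ℝ × ℂ) : etaFun Ω.sets p = infDist (WithLp.toLp 2 p) T :=
    eucSetDist_eq_infDist p ⟨_, Or.inl rfl⟩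
  have hD (x : Fin n → ℝ × ℂ) :
      DFun Ω.sets n w x =
        deformationDenom (infDist · T) (WithLp.toLp 2 w) (WithLp.toLp 2 ∘ x) := by
    simp [DFun, deformationDenom, hη, eucNorm_eq_norm_toLp, WithLp.toLp_sum]
  rw [hD] at hu
  simp only [hD, hη, eucNorm_eq_norm_toLp, WithLp.toLp_sub, WithLp.toLp_smul]
  exact sum_norm_smul_sub_smul_le (lipschitz_infDist_pt T) (fun _ => infDist_nonneg) _ _ _ _ hu

/-- Lipschitz estimate for the deformation vector field
`Xⱼ(v⃗) = (η(vⱼ)/D(v⃗)) ξ`. -/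
theorem vector_field_lipschitz (Ω : DFS) (n : ℕ) (w ξ : ℝ × ℂ)
    (u v : Fin n → ℝ × ℂ)
    (hu : 0 < DFun Ω.sets n w u) (hv : 0 < DFun Ω.sets n w v) :
    ∑ j, eucNorm ((etaFun Ω.sets (u j) / DFun Ω.sets n w u) • ξ -
        (etaFun Ω.sets (v j) / DFun Ω.sets n w v) • ξ)
      ≤ 3 * (eucNorm ξ / DFun Ω.sets n w u) * ∑ j, eucNorm (u j - v j) :=
  vector_field_lipschitz_general Ω n w ξ u v hu
end
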